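/- arXiv:2107.10417 — 8 statements merged into one kernel-verified Lean document; each statement's English description precedes it below -/
import Mathlib

section
/- The Jaccard similarity satisfies the TGM Applicability Property: for all finite sets of tokens Q and S, (1) J(Q, Q ∩ S) ≥ J(Q, S), and (2) for every subset R' ⊆ Q ∩ S, J(Q, Q ∩ S) ≥ J(Q, R'). -/
/-- Jaccard similarity of two finite sets of tokens, with the convention
`J(Q,S) = 0` when `Q ∪ S` is empty (real division by zero yields 0). -/
noncomputable def jaccard {α : Type*} [DecidableEq α] (Q S : Finset α) : ℝ :=
  ((Q ∩ S).card : ℝ) / ((Q ∪ S).card : ℝ)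

/-- The Jaccard similarity satisfies the TGM Applicability Property. -/
theorem jaccard_tgm_applicability {α : Type*} [DecidableEq α] (Q S : Finset α) :
    jaccard Q (Q ∩ S) ≥ jaccard Q S ∧
      ∀ R' ⊆ Q ∩ S, jaccard Q (Q ∩ S) ≥ jaccard Q R' := by
  have hQi : Q ∩ (Q ∩ S) = Q ∩ S := by
    rw [← Finset.inter_assoc, Finset.inter_self]
  have hQu : Q ∪ (Q ∩ S) = Q := Finset.union_eq_left.mpr Finset.inter_subset_left
  have hJ : jaccard Q (Q ∩ S) = ((Q ∩ S).card : ℝ) / (Q.card : ℝ) := by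
    rw [jaccard, hQi, hQu]
  rcases eq_or_ne Q ∅ with hQ | hQ
  · subst hQ
    simp [jaccard]
  have hQpos : (0 : ℝ) < Q.card := by
    have := Finset.card_pos.mpr (Finset.nonempty_iff_ne_empty.mpr hQ)
    exact_mod_cast this
  constructor
  · rw [hJ, jaccard, ge_iff_le]
    apply div_le_div_of_nonneg_left (by positivity) hQpos
    exact_mod_cast Finset.card_le_card Finset.subset_union_left
  · intro R' hR'
    have hR'Q : R' ⊆ Q := hR'.trans Finset.inter_subset_left
    rw [hJ, jaccard, Finset.inter_eq_right.mpr hR'Q, Finset.union_eq_left.mpr hR'Q,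
      ge_iff_le]
    gcongr
end

section
/- The cosine set similarity satisfies the TGM Applicability Property: for all finite sets of tokens Q and S, (1) C(Q, Q ∩ S) ≥ C(Q, S), and (2) for every subset R' ⊆ Q ∩ S, C(Q, Q ∩ S) ≥ C(Q, R'). -/
/-- Cosine set similarity `C(Q,S) = |Q ∩ S| / √(|Q|·|S|)`, with the convention
`C(Q,S) = 0` when `Q` or `S` is empty (the denominator is then 0 and real
division by zero yields 0). -/
noncomputable def cosineSim {α : Type*} [DecidableEq α] (Q S : Finset α) : ℝ :=
  ((Q ∩ S).card : ℝ) / Real.sqrt ((Q.card : ℝ) * (S.card : ℝ))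

lemma cosineSim_subset {α : Type*} [DecidableEq α] (Q T : Finset α) (h : T ⊆ Q) :
    cosineSim Q T = Real.sqrt (T.card : ℝ) / Real.sqrt (Q.card : ℝ) := by
  unfold cosineSim
  rw [Finset.inter_eq_right.mpr h, Real.sqrt_mul (by positivity), mul_comm, ← div_div,
    Real.div_sqrt]

/-- The cosine set similarity satisfies the TGM Applicability Property. -/
theorem cosine_tgm_applicability {α : Type*} [DecidableEq α] (Q S : Finset α) :
    cosineSim Q (Q ∩ S) ≥ cosineSim Q S ∧
      ∀ R' ⊆ Q ∩ S, cosineSim Q (Q ∩ S) ≥ cosineSim Q R' := by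
  have hQS : cosineSim Q (Q ∩ S) = Real.sqrt ((Q ∩ S).card : ℝ) / Real.sqrt (Q.card : ℝ) :=
    cosineSim_subset Q (Q ∩ S) Finset.inter_subset_left
  have hform : cosineSim Q (Q ∩ S)
      = ((Q ∩ S).card : ℝ) / Real.sqrt ((Q.card : ℝ) * ((Q ∩ S).card : ℝ)) := by
    unfold cosineSim
    rw [Finset.inter_eq_right.mpr Finset.inter_subset_left]
  constructor
  · rcases Nat.eq_zero_or_pos (Q ∩ S).card with h0 | hpos
    · have h0' : ((Q ∩ S).card : ℝ) = 0 := by exact_mod_cast h0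
      rw [hQS, h0']
      unfold cosineSim
      rw [h0']
      simp
    · rw [hform]
      unfold cosineSim
      have hp : (0:ℝ) < ((Q ∩ S).card : ℝ) := by exact_mod_cast hpos
      have hp : (0:ℝ) < ((Q ∩ S).card : ℝ) := by exact_mod_cast hpos
      have hq : (0:ℝ) < (Q.card : ℝ) := by
        have : 0 < Q.card := Finset.card_pos.mpr
          ((Finset.card_pos.mp hpos).mono Finset.inter_subset_left)
        exact_mod_cast this
      gcongr
      exact Finset.inter_subset_right
  · intro R' hR'
    have hR'Q : R' ⊆ Q := hR'.trans Finset.inter_subset_left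
    rw [hQS, cosineSim_subset Q R' hR'Q]
    have := Finset.card_le_card hR'
    gcongr
end

section
/- The Dice set similarity satisfies the TGM Applicability Property: for all finite sets of tokens Q and S, (1) D(Q, Q ∩ S) ≥ D(Q, S), and (2) for every subset R' ⊆ Q ∩ S, D(Q, Q ∩ S) ≥ D(Q, R'). -/
/-- Dice set similarity `D(Q,S) = 2·|Q ∩ S| / (|Q| + |S|)`, with the convention
`D(Q,S) = 0` when both `Q` and `S` are empty (real division by zero yields 0). -/
noncomputable def diceSim {α : Type*} [DecidableEq α] (Q S : Finset α) : ℝ :=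
  (2 * ((Q ∩ S).card : ℝ)) / ((Q.card : ℝ) + (S.card : ℝ))

lemma dice_aux1 (q c s : ℝ) (hq : 0 ≤ q) (hc : 0 ≤ c) (hcs : c ≤ s) :
    2 * c / (q + s) ≤ 2 * c / (q + c) := by
  rcases eq_or_lt_of_le (by linarith : (0:ℝ) ≤ q + c) with h | h
  · have hc0 : c = 0 := by linarith
    simp [hc0]
  · exact div_le_div_of_nonneg_left (by linarith) h (by linarith)

lemma dice_aux2 (q a b : ℝ) (hq : 0 ≤ q) (hb : 0 ≤ b) (hba : b ≤ a) :
    2 * b / (q + b) ≤ 2 * a / (q + a) := by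
  rcases eq_or_lt_of_le (by linarith : (0:ℝ) ≤ q + b) with h | h
  · have hb0 : b = 0 := by linarith
    have : 0 ≤ 2 * a / (q + a) := div_nonneg (by linarith) (by linarith)
    simpa [hb0, ← h] using this
  · rw [div_le_div_iff₀ h (by linarith)]
    nlinarith

/-- The Dice set similarity satisfies the TGM Applicability Property. -/
theorem dice_tgm_applicability {α : Type*} [DecidableEq α] (Q S : Finset α) :
    diceSim Q (Q ∩ S) ≥ diceSim Q S ∧
      ∀ R' ⊆ Q ∩ S, diceSim Q (Q ∩ S) ≥ diceSim Q R' := by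
  have hQQS : Q ∩ (Q ∩ S) = Q ∩ S := by
    rw [← Finset.inter_assoc, Finset.inter_self]
  constructor
  · unfold diceSim
    rw [hQQS]
    exact dice_aux1 _ _ _ (by positivity) (by positivity)
      (by exact_mod_cast Finset.card_le_card (Finset.inter_subset_right))
  · intro R' hR'
    unfold diceSim
    rw [hQQS]
    have hQR : Q ∩ R' = R' := Finset.inter_eq_right.mpr
      (hR'.trans Finset.inter_subset_left)
    rw [hQR]
    exact dice_aux2 _ _ _ (by positivity) (by positivity)
      (by exact_mod_cast Finset.card_le_card hR')
end

section
/- Correctness of TGM-based filtering for range queries: let Q be a nonempty finite query set, δ a real threshold, and 𝒢 a group. If some S ∈ 𝒢 satisfies J(Q, S) ≥ δ, then UB(Q,𝒢) = |Q ∩ GS(𝒢)| / |Q| ≥ δ. Consequently, every group 𝒢 with UB(Q,𝒢) < δ contains no member of the range-query answer {S : J(Q,S) ≥ δ} and can be safely pruned. -/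
/-- Correctness of TGM-based filtering for range queries: if some `S ∈ G`
satisfies `J(Q,S) ≥ δ`, then `UB(Q,G) = |Q ∩ GS(G)|/|Q| ≥ δ`; consequently a
group with `UB(Q,G) < δ` contains no member of the range-query answer and can
be safely pruned. -/
theorem tgm_range_filtering_correct {α : Type*} [DecidableEq α]
    (Q : Finset α) (hQ : Q.Nonempty) (δ : ℝ) (G : Finset (Finset α)) :
    ((∃ S ∈ G, jaccard Q S ≥ δ) → ((Q ∩ G.sup id).card : ℝ) / (Q.card : ℝ) ≥ δ) ∧
    (((Q ∩ G.sup id).card : ℝ) / (Q.card : ℝ) < δ →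
      ∀ S ∈ G, ¬ (jaccard Q S ≥ δ)) := by
  have hQpos : (0 : ℝ) < Q.card := by exact_mod_cast Finset.card_pos.mpr hQ
  have key : ∀ S ∈ G, jaccard Q S ≤ ((Q ∩ G.sup id).card : ℝ) / (Q.card : ℝ) := by
    intro S hS
    have h1 : (Q ∩ S).card ≤ (Q ∩ G.sup id).card := by
      apply Finset.card_le_card
      apply Finset.inter_subset_inter (Finset.Subset.refl Q)
      exact Finset.le_sup (f := id) hS
    have h2 : Q.card ≤ (Q ∪ S).card := Finset.card_le_card Finset.subset_union_left
    unfold jaccard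
    rcases eq_or_lt_of_le (Nat.zero_le (Q ∪ S).card) with h | hpos
    · simp [← h]
      positivity
    · apply div_le_div₀ (by positivity) (by exact_mod_cast h1) hQpos
      exact_mod_cast h2
  constructor
  · rintro ⟨S, hS, hJ⟩
    exact le_trans hJ (key S hS)
  · intro hlt S hS hJ
    exact absurd (le_trans hJ (key S hS)) (not_le.mpr hlt)
end

section
/- Correctness of TGM-based filtering for kNN queries: let Q be a nonempty finite query set, 𝒟 a finite database of finite sets of tokens, 𝒢 ⊆ 𝒟 a group, and k ∈ ℕ. Suppose there exists a collection C ⊆ 𝒟 \ 𝒢 with |C| = k such that J(Q, S') > UB(Q,𝒢) for every S' ∈ C. Then for every valid kNN answer R ⊆ 𝒟 (i.e., |R| = k and for all S ∈ R and S' ∈ 𝒟 \ R, J(Q,S) ≥ J(Q,S')), we have R ∩ 𝒢 = ∅; that is, the group 𝒢 can be safely pruned. -/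
lemma jaccard_le_ub {α : Type*} [DecidableEq α] (Q : Finset α) (hQ : Q.Nonempty)
    (G : Finset (Finset α)) (S : Finset α) (hS : S ∈ G) :
    jaccard Q S ≤ ((Q ∩ G.sup id).card : ℝ) / (Q.card : ℝ) := by
  have hQpos : (0:ℝ) < (Q.card : ℝ) := by
    exact_mod_cast Finset.card_pos.mpr hQ
  have hsub : Q ∩ S ⊆ Q ∩ G.sup id := by
    exact Finset.inter_subset_inter (le_refl Q) (Finset.le_sup (f := id) hS)
  have h1 : ((Q ∩ S).card : ℝ) ≤ ((Q ∩ G.sup id).card : ℝ) := by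
    exact_mod_cast Finset.card_le_card hsub
  have h2 : (Q.card : ℝ) ≤ ((Q ∪ S).card : ℝ) := by
    exact_mod_cast Finset.card_le_card Finset.subset_union_left
  have hUpos : (0:ℝ) < ((Q ∪ S).card : ℝ) := lt_of_lt_of_le hQpos h2
  unfold jaccard
  calc ((Q ∩ S).card : ℝ) / ((Q ∪ S).card : ℝ)
      ≤ ((Q ∩ G.sup id).card : ℝ) / ((Q ∪ S).card : ℝ) := by gcongr
    _ ≤ ((Q ∩ G.sup id).card : ℝ) / (Q.card : ℝ) := by gcongr

/-- Correctness of TGM-based filtering for kNN queries: if there are `k` sets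
outside the group `G` whose Jaccard similarity to `Q` strictly exceeds
`UB(Q,G) = |Q ∩ GS(G)|/|Q|`, then no valid kNN answer intersects `G`, so `G`
can be safely pruned. -/
theorem tgm_knn_filtering_correct {α : Type*} [DecidableEq α]
    (Q : Finset α) (hQ : Q.Nonempty) (D : Finset (Finset α))
    (G : Finset (Finset α)) (hG : G ⊆ D) (k : ℕ)
    (hC : ∃ C ⊆ D \ G, C.card = k ∧
      ∀ S' ∈ C, jaccard Q S' > ((Q ∩ G.sup id).card : ℝ) / (Q.card : ℝ)) :
    ∀ R ⊆ D, R.card = k →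
      (∀ S ∈ R, ∀ S' ∈ D \ R, jaccard Q S ≥ jaccard Q S') →
      R ∩ G = ∅ := by
  intro R hRD hRk hknn
  obtain ⟨C, hCD, hCk, hCgt⟩ := hC
  by_contra h
  obtain ⟨S, hS⟩ := Finset.nonempty_iff_ne_empty.mpr h
  rw [Finset.mem_inter] at hS
  have hSnotC : S ∉ C := fun hSC => (Finset.mem_sdiff.mp (hCD hSC)).2 hS.2
  -- C ≠ R, indeed C ⊄ R would give C = R by cardinality
  have : ∃ S' ∈ C, S' ∉ R := by
    by_contra hall
    push_neg at hall
    have : C = R := Finset.eq_of_subset_of_card_le hall (by omega)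
    exact hSnotC (this ▸ hS.1)
  obtain ⟨S', hS'C, hS'R⟩ := this
  have hS'DR : S' ∈ D \ R :=
    Finset.mem_sdiff.mpr ⟨(Finset.mem_sdiff.mp (hCD hS'C)).1, hS'R⟩
  have h1 := hknn S hS.1 S' hS'DR
  have h2 := hCgt S' hS'C
  have h3 := jaccard_le_ub Q hQ G S hS.2
  linarith
end

section
/- TGM upper bound for cosine similarity: for every nonempty finite query set Q and every group 𝒢, and for every S ∈ 𝒢, C(Q, S) ≤ √(|Q ∩ GS(𝒢)| / |Q|). -/
/-- TGM upper bound for cosine similarity: for every nonempty query set `Q`,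
group `G`, and `S ∈ G`, `C(Q,S) ≤ √(|Q ∩ GS(G)| / |Q|)`. -/
theorem tgm_upper_bound_cosine {α : Type*} [DecidableEq α]
    (Q : Finset α) (hQ : Q.Nonempty) (G : Finset (Finset α)) :
    ∀ S ∈ G, cosineSim Q S ≤
      Real.sqrt (((Q ∩ G.sup id).card : ℝ) / (Q.card : ℝ)) := by
  intro S hS
  unfold cosineSim
  set a : ℝ := ((Q ∩ S).card : ℝ) with ha
  set g : ℝ := ((Q ∩ G.sup id).card : ℝ) with hg
  have hq : (0:ℝ) < (Q.card : ℝ) := by exact_mod_cast Finset.card_pos.mpr hQ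
  have hag : a ≤ g := by
    rw [ha, hg]
    exact_mod_cast Finset.card_le_card
      (Finset.inter_subset_inter le_rfl (Finset.le_sup (f := id) hS))
  have has : a ≤ (S.card : ℝ) := by
    rw [ha]
    exact_mod_cast Finset.card_le_card (Finset.inter_subset_right)
  have ha0 : 0 ≤ a := by positivity
  have hg0 : 0 ≤ g := by positivity
  rcases Nat.eq_zero_or_pos S.card with h | h
  · have : a = 0 := le_antisymm (by exact_mod_cast has.trans_eq (by exact_mod_cast h)) ha0
    rw [this, zero_div]
    positivity
  · have hs : (0:ℝ) < (S.card : ℝ) := by exact_mod_cast h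
    have hqs : (0:ℝ) < Real.sqrt ((Q.card : ℝ) * (S.card : ℝ)) :=
      Real.sqrt_pos.mpr (by positivity)
    rw [div_le_iff₀ hqs]
    have key : a ≤ Real.sqrt (g * (S.card : ℝ)) := by
      rw [show a = Real.sqrt (a * a) from (Real.sqrt_mul_self ha0).symm]
      exact Real.sqrt_le_sqrt (mul_le_mul hag has ha0 hg0)
    calc a ≤ Real.sqrt (g * (S.card : ℝ)) := key
      _ = Real.sqrt (g / (Q.card : ℝ)) * Real.sqrt ((Q.card : ℝ) * (S.card : ℝ)) := by
          rw [← Real.sqrt_mul (by positivity)]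
          congr 1
          field_simp
end

section
/- TGM upper bound for Dice similarity: for every nonempty finite query set Q and every group 𝒢, and for every S ∈ 𝒢, D(Q, S) ≤ 2r / (|Q| + r), where r = |Q ∩ GS(𝒢)|. -/
/-- TGM upper bound for Dice similarity: for every nonempty query set `Q`,
group `G`, and `S ∈ G`, `D(Q,S) ≤ 2r / (|Q| + r)` where `r = |Q ∩ GS(G)|`. -/
theorem tgm_upper_bound_dice {α : Type*} [DecidableEq α]
    (Q : Finset α) (hQ : Q.Nonempty) (G : Finset (Finset α)) :
    ∀ S ∈ G, diceSim Q S ≤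
      2 * ((Q ∩ G.sup id).card : ℝ) /
        ((Q.card : ℝ) + ((Q ∩ G.sup id).card : ℝ)) := by
  intro S hS
  have hq : (1 : ℝ) ≤ Q.card := by exact_mod_cast Finset.card_pos.mpr hQ
  have har : ((Q ∩ S).card : ℝ) ≤ ((Q ∩ G.sup id).card : ℝ) := by
    exact_mod_cast Finset.card_le_card
      (Finset.inter_subset_inter_left (Finset.le_sup (f := id) hS))
  have has : ((Q ∩ S).card : ℝ) ≤ (S.card : ℝ) := by
    exact_mod_cast Finset.card_le_card (Finset.inter_subset_right)
  have hr0 : (0 : ℝ) ≤ ((Q ∩ G.sup id).card : ℝ) := by positivity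
  have ha0 : (0 : ℝ) ≤ ((Q ∩ S).card : ℝ) := by positivity
  have hs0 : (0 : ℝ) ≤ (S.card : ℝ) := by positivity
  unfold diceSim
  rw [div_le_div_iff₀ (by linarith) (by linarith)]
  nlinarith
end

section
/- Theorem 4.2 (uniform query model, comparison form): let T be a finite set of tokens and let 𝒢_1, …, 𝒢_n and 𝒢'_1, …, 𝒢'_n be two families of groups of finite subsets of T in which every group (in both families) contains exactly c sets, and let 1 ≤ m ≤ |T|. If Σ_{g=1}^{n} |GS(𝒢_g)| ≤ Σ_{g=1}^{n} |GS(𝒢'_g)|, then Σ_{Q ⊆ T, |Q| = m} Σ_{g=1}^{n} |𝒢_g| · (1 − |GS(𝒢_g) ∩ Q| / m) ≥ Σ_{Q ⊆ T, |Q| = m} Σ_{g=1}^{n} |𝒢'_g| · (1 − |GS(𝒢'_g) ∩ Q| / m); that is, among balanced partitionings, the one minimizing U = Σ_g |⋃_{S ∈ 𝒢_g} S| provides the highest expected pruning efficiency over queries drawn uniformly among m-element subsets of T. -/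
/-!
Summing `|U ∩ Q|` over the `m`-subsets `Q` of `T` counts each token of `U ⊆ T` once for each of
the `C(|T| - 1, m - 1)` subsets containing it. Hence, when every group has `c` sets, the total
pruning efficiency is `c · (n · C(|T|, m) - C(|T| - 1, m - 1) / m · Σ_g |GS(𝒢_g)|)`, which is
antitone in `Σ_g |GS(𝒢_g)|`.
-/

open Finset

section

variable {α : Type*} [DecidableEq α] {T : Finset α} {m : ℕ}

lemma card_filter_mem_powersetCard {x : α} (hx : x ∈ T) (hm : 1 ≤ m) :
    #{Q ∈ T.powersetCard m | x ∈ Q} = (#T - 1).choose (m - 1) := by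
  simpa only [singleton_subset_iff, card_singleton] using
    card_filter_powersetCard_subset {x} T m (singleton_subset_iff.2 hx) (by simpa)

lemma sum_card_inter_powersetCard {S : Finset α} (hS : S ⊆ T) (hm : 1 ≤ m) :
    ∑ Q ∈ T.powersetCard m, #(S ∩ Q) = #S * (#T - 1).choose (m - 1) :=
  sum_card_inter fun _ hx ↦ card_filter_mem_powersetCard (hS hx) hm

lemma sum_powersetCard_sum_mul_one_sub_card_inter_div {ι : Type*} (s : Finset ι)
    (U : ι → Finset α) (hU : ∀ i ∈ s, U i ⊆ T) (c : ℝ) (hm : 1 ≤ m) :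
    ∑ Q ∈ T.powersetCard m, ∑ i ∈ s, c * (1 - (#(U i ∩ Q) : ℝ) / m) =
      c * (#s * (#T).choose m - (#T - 1).choose (m - 1) / m * ∑ i ∈ s, (#(U i) : ℝ)) := by
  have hcount : ∀ i ∈ s, ∑ Q ∈ T.powersetCard m, (1 - (#(U i ∩ Q) : ℝ) / m) =
      (#T).choose m - (#T - 1).choose (m - 1) / m * #(U i) := fun i hi ↦ by
    rw [sum_sub_distrib, ← sum_div, ← Nat.cast_sum, sum_card_inter_powersetCard (hU i hi) hm]
    simp only [sum_const, card_powersetCard, nsmul_eq_mul, mul_one, Nat.cast_mul]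
    ring
  rw [sum_comm, sum_congr rfl fun i hi ↦ by rw [← mul_sum, hcount i hi], ← mul_sum,
    sum_sub_distrib, ← mul_sum]
  simp only [sum_const, nsmul_eq_mul]

end

theorem balanced_partition_min_union_max_pe_general {α : Type*} [DecidableEq α]
    (T : Finset α) (n c : ℕ) (G G' : Fin n → Finset (Finset α))
    (hGT : ∀ g, ∀ S ∈ G g, S ⊆ T) (hG'T : ∀ g, ∀ S ∈ G' g, S ⊆ T)
    (hc : ∀ g, (G g).card = c) (hc' : ∀ g, (G' g).card = c)
    (m : ℕ) (hm1 : 1 ≤ m)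
    (hU : ∑ g : Fin n, ((G g).sup id).card ≤ ∑ g : Fin n, ((G' g).sup id).card) :
    ∑ Q ∈ T.powersetCard m, ∑ g : Fin n,
        ((G g).card : ℝ) * (1 - (((G g).sup id ∩ Q).card : ℝ) / (m : ℝ)) ≥
      ∑ Q ∈ T.powersetCard m, ∑ g : Fin n,
        ((G' g).card : ℝ) * (1 - (((G' g).sup id ∩ Q).card : ℝ) / (m : ℝ)) := by
  simp only [hc, hc']
  rw [sum_powersetCard_sum_mul_one_sub_card_inter_div _ (fun g ↦ (G g).sup id)
      (fun g _ ↦ Finset.sup_le (hGT g)) _ hm1,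
    sum_powersetCard_sum_mul_one_sub_card_inter_div _ (fun g ↦ (G' g).sup id)
      (fun g _ ↦ Finset.sup_le (hG'T g)) _ hm1]
  have hU' : (∑ g, (#((G g).sup id) : ℝ)) ≤ ∑ g, (#((G' g).sup id) : ℝ) := by exact_mod_cast hU
  gcongr

/-- Theorem 4.2 (uniform query model, comparison form): among two balanced
families of groups (every group in both families contains exactly `c` sets of
tokens, all subsets of `T`), the family with the smaller total
`U = Σ_g |GS(G g)|` provides the higher expected pruning efficiency over
queries drawn uniformly among `m`-element subsets of `T`. -/
theorem balanced_partition_min_union_max_pe {α : Type*} [DecidableEq α]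
    (T : Finset α) (n c : ℕ) (G G' : Fin n → Finset (Finset α))
    (hGT : ∀ g, ∀ S ∈ G g, S ⊆ T) (hG'T : ∀ g, ∀ S ∈ G' g, S ⊆ T)
    (hc : ∀ g, (G g).card = c) (hc' : ∀ g, (G' g).card = c)
    (m : ℕ) (hm1 : 1 ≤ m) (hm2 : m ≤ T.card)
    (hU : ∑ g : Fin n, ((G g).sup id).card ≤ ∑ g : Fin n, ((G' g).sup id).card) :
    ∑ Q ∈ T.powersetCard m, ∑ g : Fin n,
        ((G g).card : ℝ) * (1 - (((G g).sup id ∩ Q).card : ℝ) / (m : ℝ)) ≥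
      ∑ Q ∈ T.powersetCard m, ∑ g : Fin n,
        ((G' g).card : ℝ) * (1 - (((G' g).sup id ∩ Q).card : ℝ) / (m : ℝ)) :=
  balanced_partition_min_union_max_pe_general T n c G G' hGT hG'T hc hc' m hm1 hU
end
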